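/- arXiv:2409.15982 — 6 statements merged into one kernel-verified Lean document; each statement's English description precedes it below -/
import Mathlib

section
/- The Nadeau–Tewari poset P_n on nonincreasing integer sequences of length n, where u ⊴ v iff u_i ≤ v_i for all i and every descent of v (i.e., index i with v_i > v_{i+1}) is a descent of u, is a lattice. Moreover, the join of u and v is the componentwise smallest nonincreasing sequence w with w ≥ u, w ≥ v componentwise whose descent set is contained in the intersection of the descent sets of u and v. -/
/-!
Both lattice operations are computed left to right. Componentwise above `max u v`, the join
may descend only at common descents of `u` and `v`: it restarts from `max u v` right after
each common descent and stays constant elsewhere. Componentwise below `min u v`, the meet must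
descend at every descent of `u` or `v`: at each step it is the smaller of `min u v` and the
previous value, lowered by one at such a descent. An induction along the index shows that
each sequence is extremal among those obeying the same constraints, and that its descents are
exactly the prescribed ones.
-/

/-- `u` has a descent at index `i` (with `i+1 < n`). -/
def Desc {n : ℕ} (u : Fin n → ℤ) (i : ℕ) (h : i + 1 < n) : Prop :=
  u ⟨i + 1, h⟩ < u ⟨i, Nat.lt_of_succ_lt h⟩

/-- The Nadeau–Tewari order on nonincreasing integer sequences of length `n`. -/
def NTle {n : ℕ} (u v : Fin n → ℤ) : Prop :=
  (∀ i, u i ≤ v i) ∧ ∀ (i : ℕ) (h : i + 1 < n), Desc v i h → Desc u i h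

namespace NadeauTewari

variable {n : ℕ}

instance (u : Fin n → ℤ) (i : ℕ) (h : i + 1 < n) : Decidable (Desc u i h) :=
  inferInstanceAs (Decidable (_ < _))

lemma antitone_of_succ_le {f : Fin n → ℤ}
    (h : ∀ (i : ℕ) (hi : i + 1 < n), f ⟨i + 1, hi⟩ ≤ f ⟨i, Nat.lt_of_succ_lt hi⟩) :
    Antitone f := by
  cases n with
  | zero => exact fun i => i.elim0
  | succ k => exact Fin.antitone_iff_succ_le.2 fun i => h i (Nat.succ_lt_succ i.2)

lemma succ_le_of_antitone {z : Fin n → ℤ} (hz : Antitone z) (i : ℕ) (h : i + 1 < n) :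
    z ⟨i + 1, h⟩ ≤ z ⟨i, Nat.lt_of_succ_lt h⟩ :=
  hz (Nat.le_succ i)

lemma desc_max {u v : Fin n → ℤ} {i : ℕ} {h : i + 1 < n} (hu : Desc u i h) (hv : Desc v i h) :
    Desc (fun j => max (u j) (v j)) i h :=
  max_lt_max hu hv

lemma desc_or_desc_of_desc_min {u v : Fin n → ℤ} {i : ℕ} {h : i + 1 < n}
    (hd : Desc (fun j => min (u j) (v j)) i h) : Desc u i h ∨ Desc v i h := by
  by_contra! hnd
  exact hd.not_ge (min_le_min (not_lt.1 hnd.1) (not_lt.1 hnd.2))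

section Join

variable (P : (i : ℕ) → i + 1 < n → Prop) [∀ i h, Decidable (P i h)] (m : Fin n → ℤ)

def joinSeq : Fin n → ℤ
  | ⟨0, h⟩ => m ⟨0, h⟩
  | ⟨i + 1, h⟩ => if P i h then m ⟨i + 1, h⟩ else joinSeq ⟨i, Nat.lt_of_succ_lt h⟩

variable {P m}

lemma le_joinSeq (hm : Antitone m) : ∀ i, m i ≤ joinSeq P m i
  | ⟨0, _⟩ => by rw [joinSeq]
  | ⟨i + 1, h⟩ => by
    rw [joinSeq]
    split_ifs
    · exact le_rfl
    · exact (succ_le_of_antitone hm i h).trans (le_joinSeq hm ⟨i, Nat.lt_of_succ_lt h⟩)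

lemma joinSeq_antitone (hm : Antitone m) : Antitone (joinSeq P m) := by
  refine antitone_of_succ_le fun i h => ?_
  rw [joinSeq]
  split_ifs
  · exact (succ_le_of_antitone hm i h).trans (le_joinSeq hm _)
  · exact le_rfl

lemma desc_joinSeq_iff (hm : Antitone m) (hP : ∀ i h, P i h → Desc m i h) (i : ℕ)
    (h : i + 1 < n) : Desc (joinSeq P m) i h ↔ P i h := by
  unfold Desc
  rw [joinSeq]
  split_ifs with hi
  · exact iff_of_true ((hP i h hi).trans_le (le_joinSeq hm _)) hi
  · exact iff_of_false (lt_irrefl _) hi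

lemma joinSeq_le {z : Fin n → ℤ} (hz : Antitone z) (hmz : ∀ i, m i ≤ z i)
    (hzP : ∀ i h, Desc z i h → P i h) : ∀ i, joinSeq P m i ≤ z i
  | ⟨0, _⟩ => by rw [joinSeq]; exact hmz _
  | ⟨i + 1, h⟩ => by
    rw [joinSeq]
    split_ifs with hi
    · exact hmz _
    · have hflat : z ⟨i, Nat.lt_of_succ_lt h⟩ ≤ z ⟨i + 1, h⟩ :=
        not_lt.1 fun hd => hi (hzP i h hd)
      exact (joinSeq_le hz hmz hzP ⟨i, Nat.lt_of_succ_lt h⟩).trans hflat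

end Join

section Meet

variable (P : (i : ℕ) → i + 1 < n → Prop) [∀ i h, Decidable (P i h)] (m : Fin n → ℤ)

def meetSeq : Fin n → ℤ
  | ⟨0, h⟩ => m ⟨0, h⟩
  | ⟨i + 1, h⟩ =>
    min (m ⟨i + 1, h⟩) (meetSeq ⟨i, Nat.lt_of_succ_lt h⟩ - if P i h then 1 else 0)

variable {P m}

lemma meetSeq_le : ∀ i, meetSeq P m i ≤ m i
  | ⟨0, _⟩ => by rw [meetSeq]
  | ⟨_ + 1, _⟩ => by rw [meetSeq]; exact min_le_left _ _

lemma meetSeq_succ_le (i : ℕ) (h : i + 1 < n) :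
    meetSeq P m ⟨i + 1, h⟩ ≤
      meetSeq P m ⟨i, Nat.lt_of_succ_lt h⟩ - if P i h then 1 else 0 := by
  rw [meetSeq]
  exact min_le_right _ _

lemma meetSeq_antitone : Antitone (meetSeq P m) := by
  refine antitone_of_succ_le fun i h => (meetSeq_succ_le i h).trans ?_
  split_ifs <;> omega

lemma desc_meetSeq_iff (hP : ∀ i h, Desc m i h → P i h) (i : ℕ) (h : i + 1 < n) :
    Desc (meetSeq P m) i h ↔ P i h := by
  by_cases hi : P i h
  · have hstep := meetSeq_succ_le (P := P) (m := m) i h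
    rw [if_pos hi] at hstep
    exact iff_of_true (by unfold Desc; omega) hi
  · have hflat : m ⟨i, Nat.lt_of_succ_lt h⟩ ≤ m ⟨i + 1, h⟩ :=
      not_lt.1 fun hd => hi (hP i h hd)
    refine iff_of_false (fun hd => ?_) hi
    unfold Desc at hd
    rw [meetSeq, if_neg hi, sub_zero, min_eq_right ((meetSeq_le _).trans hflat)] at hd
    exact lt_irrefl _ hd

lemma le_meetSeq {z : Fin n → ℤ} (hz : Antitone z) (hzm : ∀ i, z i ≤ m i)
    (hPz : ∀ i h, P i h → Desc z i h) : ∀ i, z i ≤ meetSeq P m i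
  | ⟨0, _⟩ => by rw [meetSeq]; exact hzm _
  | ⟨i + 1, h⟩ => by
    rw [meetSeq]
    refine le_min (hzm _) ?_
    have ih := le_meetSeq hz hzm hPz ⟨i, Nat.lt_of_succ_lt h⟩
    split_ifs with hi
    · have : z ⟨i + 1, h⟩ < z ⟨i, Nat.lt_of_succ_lt h⟩ := hPz i h hi
      omega
    · exact (succ_le_of_antitone hz i h).trans (by omega)

end Meet

end NadeauTewari

open NadeauTewari in
/-- The Nadeau–Tewari poset on nonincreasing sequences of length `n` is a lattice, and
the join of `u` and `v` is the componentwise smallest nonincreasing sequence, componentwise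
above both, whose descent set is contained in the intersection of their descent sets. -/
theorem stmt2 (n : ℕ) :
    (∀ u v : Fin n → ℤ, Antitone u → Antitone v →
      ∃ w : Fin n → ℤ, Antitone w ∧
        -- `w` is the join of `u` and `v`
        NTle u w ∧ NTle v w ∧
        (∀ z : Fin n → ℤ, Antitone z → NTle u z → NTle v z → NTle w z) ∧
        -- `w` is componentwise above `u` and `v`, its descents are common descents of `u,v`,
        -- and it is componentwise smallest with these properties
        (∀ i, u i ≤ w i) ∧ (∀ i, v i ≤ w i) ∧
        (∀ (i : ℕ) (h : i + 1 < n), Desc w i h → Desc u i h ∧ Desc v i h) ∧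
        (∀ z : Fin n → ℤ, Antitone z → (∀ i, u i ≤ z i) → (∀ i, v i ≤ z i) →
          (∀ (i : ℕ) (h : i + 1 < n), Desc z i h → Desc u i h ∧ Desc v i h) →
          ∀ i, w i ≤ z i)) ∧
    -- meets exist as well
    (∀ u v : Fin n → ℤ, Antitone u → Antitone v →
      ∃ w : Fin n → ℤ, Antitone w ∧ NTle w u ∧ NTle w v ∧
        ∀ z : Fin n → ℤ, Antitone z → NTle z u → NTle z v → NTle z w) := by
  refine ⟨fun u v hu hv => ?_, fun u v _ _ => ?_⟩
  · set w := joinSeq (fun i h => Desc u i h ∧ Desc v i h) fun j => max (u j) (v j)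
    have hm : Antitone fun j => max (u j) (v j) := hu.max hv
    have hw i h : Desc w i h ↔ Desc u i h ∧ Desc v i h :=
      desc_joinSeq_iff hm (fun _ _ hi => desc_max hi.1 hi.2) i h
    have hwu i : u i ≤ w i := (le_max_left _ _).trans (le_joinSeq hm i)
    have hwv i : v i ≤ w i := (le_max_right _ _).trans (le_joinSeq hm i)
    have hwz {z : Fin n → ℤ} (hz : Antitone z) (hzu : ∀ i, u i ≤ z i)
        (hzv : ∀ i, v i ≤ z i)
        (hzd : ∀ i h, Desc z i h → Desc u i h ∧ Desc v i h) : ∀ i, w i ≤ z i :=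
      joinSeq_le hz (fun i => max_le (hzu i) (hzv i)) hzd
    refine ⟨w, joinSeq_antitone hm, ⟨hwu, fun i h hd => ((hw i h).1 hd).1⟩,
      ⟨hwv, fun i h hd => ((hw i h).1 hd).2⟩, ?_, hwu, hwv, fun i h => (hw i h).1, @hwz⟩
    rintro z hz ⟨hzu, hdu⟩ ⟨hzv, hdv⟩
    exact ⟨hwz hz hzu hzv fun i h hd => ⟨hdu i h hd, hdv i h hd⟩,
      fun i h hd => (hw i h).2 ⟨hdu i h hd, hdv i h hd⟩⟩
  · set w := meetSeq (fun i h => Desc u i h ∨ Desc v i h) fun j => min (u j) (v j)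
    have hw i h : Desc w i h ↔ Desc u i h ∨ Desc v i h :=
      desc_meetSeq_iff (fun _ _ => desc_or_desc_of_desc_min) i h
    refine ⟨w, meetSeq_antitone,
      ⟨fun i => (meetSeq_le i).trans (min_le_left _ _), fun i h hd => (hw i h).2 (.inl hd)⟩,
      ⟨fun i => (meetSeq_le i).trans (min_le_right _ _), fun i h hd => (hw i h).2 (.inr hd)⟩,
      ?_⟩
    rintro z hz ⟨hzu, hdu⟩ ⟨hzv, hdv⟩
    exact ⟨le_meetSeq hz (fun i => le_min (hzu i) (hzv i))
        fun i h hd => hd.elim (hdu i h) (hdv i h),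
      fun i h hd => ((hw i h).1 hd).elim (hdu i h) (hdv i h)⟩
end

section
/- Every sylvester congruence class of words over the positive integers contains exactly one word avoiding the patterns aba and acb; moreover such a word w is uniquely determined by the pair (NInc(w), Low(w)), where NInc(w) is the nonincreasing rearrangement of w and Low(w) is the largest nonincreasing word componentwise below w. -/
/-!
Orient each sylvester commutation as `a c ⋯ b ⟶ c a ⋯ b`. This rewriting system terminates,
since the weight `∑ i, i * w[i]` drops, and it is locally confluent: two overlapping steps
`a c e ⟶ c a e` and `a c e ⟶ a e c` both lead to `e c a`, and disjoint steps commute. By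
Newman's lemma each class therefore has a unique normal form, and the normal forms are the words
with no subword `a c b` with `a ≤ b < c`, i.e. those avoiding `aba` and `acb`.

Two such words with the same letters and the same `low` agree: at a first position where they
differ, with letters `b < b'`, equality of `low` forces some letter `a ≤ b` in the common prefix,
and `b` reappears after `b'` in the second word, giving the forbidden subword `a b' b`.
-/

/-- One application of a sylvester commutation `a c ⋯ b ≡ c a ⋯ b` with `a ≤ b < c`. -/
def SylStep (w₁ w₂ : List ℕ) : Prop :=
  ∃ (p q r : List ℕ) (a b c : ℕ), a ≤ b ∧ b < c ∧
    w₁ = p ++ a :: c :: (q ++ b :: r) ∧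
    w₂ = p ++ c :: a :: (q ++ b :: r)

/-- The sylvester congruence: equivalence generated by the commutations. -/
def Syl : List ℕ → List ℕ → Prop := Relation.EqvGen SylStep

/-- `w` avoids the pattern `aba`. -/
def AvoidsABA (w : List ℕ) : Prop :=
  ∀ i j k, i < j → j < k → k < w.length →
    ¬ (w.getD i 0 = w.getD k 0 ∧ w.getD k 0 < w.getD j 0)

/-- `w` avoids the pattern `acb`. -/
def AvoidsACB (w : List ℕ) : Prop :=
  ∀ i j k, i < j → j < k → k < w.length →
    ¬ (w.getD i 0 < w.getD k 0 ∧ w.getD k 0 < w.getD j 0)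

/-- `low w`: the running minimum of `w`, i.e. the componentwise-largest nonincreasing word
below `w`; it records the left-to-right minima of `w`. -/
def low : List ℕ → List ℕ
  | [] => []
  | a :: w => a :: (low w).map (min a)

open List

namespace Relation

variable {α : Type*} {r : α → α → Prop}

theorem join_reflTransGen_of_locallyConfluent (hwf : WellFounded (flip r))
    (hloc : ∀ a b c, r a b → r a c → Join (ReflTransGen r) b c) {a b c : α}
    (hab : ReflTransGen r a b) (hac : ReflTransGen r a c) : Join (ReflTransGen r) b c := by
  induction a using hwf.induction generalizing b c with
  | _ a ih =>
  rcases hab.cases_head with rfl | ⟨b₁, hab₁, hb₁b⟩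
  · exact ⟨c, hac, .refl⟩
  rcases hac.cases_head with rfl | ⟨c₁, hac₁, hc₁c⟩
  · exact ⟨b, .refl, .head hab₁ hb₁b⟩
  obtain ⟨d, hb₁d, hc₁d⟩ := hloc _ _ _ hab₁ hac₁
  obtain ⟨e, hbe, hde⟩ := ih b₁ hab₁ hb₁b hb₁d
  obtain ⟨f, hef, hcf⟩ := ih c₁ hac₁ (hc₁d.trans hde) hc₁c
  exact ⟨f, hbe.trans hef, hcf⟩

theorem exists_reflTransGen_forall_not (hwf : WellFounded (flip r)) (a : α) :
    ∃ b, ReflTransGen r a b ∧ ∀ c, ¬ r b c := by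
  induction a using hwf.induction with
  | _ a ih =>
  by_cases h : ∃ c, r a c
  · obtain ⟨c, hac⟩ := h
    obtain ⟨b, hcb, hb⟩ := ih c hac
    exact ⟨b, .head hac hcb, hb⟩
  · exact ⟨a, .refl, not_exists.mp h⟩

theorem ReflTransGen.eq_of_forall_not {a b : α} (hab : ReflTransGen r a b) (ha : ∀ c, ¬ r a c) :
    a = b :=
  hab.cases_head.resolve_right fun ⟨c, hac, _⟩ => ha c hac

theorem existsUnique_eqvGen_forall_not (hwf : WellFounded (flip r))
    (hloc : ∀ a b c, r a b → r a c → Join (ReflTransGen r) b c) (a : α) :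
    ∃! b, EqvGen r a b ∧ ∀ c, ¬ r b c := by
  obtain ⟨b, hab, hb⟩ := exists_reflTransGen_forall_not hwf a
  refine ⟨b, ⟨EqvGen.reflTransGen_le_eqvGen r a b hab, hb⟩, fun b' ⟨hab', hb'⟩ => ?_⟩
  have := (equivalence_join (r := ReflTransGen r) fun _ _ _ =>
    join_reflTransGen_of_locallyConfluent hwf hloc).isEquiv
  obtain ⟨d, hb'd, hbd⟩ := EqvGen.eqvGen_le (r' := Join (ReflTransGen r))
    (fun x y hxy => ⟨y, .single hxy, .refl⟩) b' b
    ((EqvGen.symm _ _ hab').trans _ _ _ (EqvGen.reflTransGen_le_eqvGen r a b hab))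
  exact (hb'd.eq_of_forall_not hb').trans (hbd.eq_of_forall_not hb).symm

end Relation

theorem List.triple_sublist_iff {α : Type*} {w : List α} {x y z : α} (d : α) :
    [x, y, z] <+ w ↔ ∃ i j k, i < j ∧ j < k ∧ k < w.length ∧
      w.getD i d = x ∧ w.getD j d = y ∧ w.getD k d = z := by
  constructor
  · intro h
    obtain ⟨is, his, hlt⟩ := List.sublist_eq_map_getElem h
    match is, his, hlt with
    | [i, j, k], his, hlt =>
      simp only [Fin.getElem_fin, map_cons, map_nil, cons.injEq, and_true, pairwise_cons,
        mem_cons, not_mem_nil, or_false, forall_eq_or_imp, forall_eq, IsEmpty.forall_iff,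
        implies_true, Pairwise.nil, and_self] at his hlt
      exact ⟨i, j, k, hlt.1.1, hlt.2, k.2, by simp [his]⟩
  · rintro ⟨i, j, k, hij, hjk, hk, rfl, rfl, rfl⟩
    have hi : i < w.length := by omega
    have hj : j < w.length := by omega
    have := List.map_getElem_sublist (l := w) (is := [⟨i, hi⟩, ⟨j, hj⟩, ⟨k, hk⟩])
      (by simp; omega)
    simpa [List.getD_eq_getElem, hi, hj, hk] using this

def AvoidsSylPattern (w : List ℕ) : Prop :=
  ∀ a b c, a ≤ b → b < c → ¬ [a, c, b] <+ w

theorem avoidsABA_and_avoidsACB_iff {w : List ℕ} :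
    AvoidsABA w ∧ AvoidsACB w ↔ AvoidsSylPattern w := by
  simp only [AvoidsABA, AvoidsACB, AvoidsSylPattern, List.triple_sublist_iff 0]
  constructor
  · rintro ⟨hABA, hACB⟩ a b c hab hbc ⟨i, j, k, hij, hjk, hk, rfl, rfl, rfl⟩
    rcases hab.eq_or_lt with hab | hab
    exacts [hABA i j k hij hjk hk ⟨hab, hbc⟩, hACB i j k hij hjk hk ⟨hab, hbc⟩]
  · intro h
    constructor <;> rintro i j k hij hjk hk ⟨hik, hkj⟩ <;>
      exact h _ _ _ hik.le hkj ⟨i, j, k, hij, hjk, hk, rfl, rfl, rfl⟩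

theorem SylStep.of_mem (p : List ℕ) {a b c : ℕ} {t : List ℕ} (hb : b ∈ t) (hab : a ≤ b)
    (hbc : b < c) : SylStep (p ++ a :: c :: t) (p ++ c :: a :: t) := by
  obtain ⟨q, r, rfl⟩ := List.append_of_mem hb
  exact ⟨p, q, r, a, b, c, hab, hbc, rfl, rfl⟩

theorem SylStep.cons (x : ℕ) {w u : List ℕ} (h : SylStep w u) : SylStep (x :: w) (x :: u) := by
  obtain ⟨p, q, r, a, b, c, hab, hbc, rfl, rfl⟩ := h
  exact ⟨x :: p, q, r, a, b, c, hab, hbc, rfl, rfl⟩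

/-- `∑ i, i * w[i]`, which drops when a larger letter moves one place to the left. -/
def weightedSum : List ℕ → ℕ
  | [] => 0
  | _ :: w => w.sum + weightedSum w

theorem weightedSum_lt_of_sylStep {w u : List ℕ} (h : SylStep w u) :
    weightedSum u < weightedSum w := by
  obtain ⟨p, q, r, a, b, c, hab, hbc, rfl, rfl⟩ := h
  induction p with
  | nil => simp only [List.nil_append, weightedSum, List.sum_cons]; omega
  | cons x p ih =>
    simp only [List.cons_append, weightedSum, List.sum_append, List.sum_cons]
    omega

theorem wellFounded_flip_sylStep : WellFounded (flip SylStep) :=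
  Subrelation.wf (fun h => weightedSum_lt_of_sylStep h) (InvImage.wf weightedSum wellFounded_lt)

theorem join_of_sylStep_cons_cons {a b c : ℕ} {t u : List ℕ} (hb : b ∈ t) (hab : a ≤ b)
    (hbc : b < c) (h : SylStep (a :: c :: t) u) :
    Relation.Join (Relation.ReflTransGen SylStep) (c :: a :: t) u := by
  obtain ⟨p, q, r, a', b', c', hab', hbc', hw, rfl⟩ := h
  rcases p with _ | ⟨y, _ | ⟨z, s⟩⟩
  · simp only [List.nil_append, List.cons.injEq] at hw
    obtain ⟨rfl, rfl, rfl⟩ := hw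
    exact ⟨_, .refl, .refl⟩
  · simp only [List.cons_append, List.nil_append, List.cons.injEq] at hw
    obtain ⟨rfl, rfl, rfl⟩ := hw
    have hb' : b ∈ q ++ b' :: r := by
      simp only [List.mem_cons] at hb
      exact hb.resolve_left (by omega)
    refine ⟨c' :: c :: a :: (q ++ b' :: r), ?_, ?_⟩
    · exact .tail (.single (SylStep.of_mem [c] (by simp) (by omega) hbc'))
        (SylStep.of_mem [] (by simp) hab' hbc')
    · exact .tail (.single (SylStep.of_mem [] (by simp [hb']) hab (by omega)))
        (SylStep.of_mem [c'] hb' hab hbc)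
  · simp only [List.cons_append, List.cons.injEq] at hw
    obtain ⟨rfl, rfl, rfl⟩ := hw
    refine ⟨c :: a :: (s ++ c' :: a' :: (q ++ b' :: r)), ?_, ?_⟩
    · exact .single (SylStep.of_mem (c :: a :: s) (by simp) hab' hbc')
    · refine .single (SylStep.of_mem [] ?_ hab hbc)
      simp only [List.append_eq, List.mem_append, List.mem_cons] at hb ⊢
      tauto

theorem sylStep_locallyConfluent (w u u' : List ℕ) (h : SylStep w u) (h' : SylStep w u') :
    Relation.Join (Relation.ReflTransGen SylStep) u u' := by
  induction w generalizing u u' with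
  | nil =>
    obtain ⟨p, q, r, a, b, c, -, -, hw, -⟩ := h
    simp at hw
  | cons x w ih =>
    obtain ⟨_ | ⟨y, p⟩, q, r, a, b, c, hab, hbc, hw, rfl⟩ := h
    · rw [List.nil_append] at hw ⊢
      rw [hw] at h'
      exact join_of_sylStep_cons_cons (by simp) hab hbc h'
    obtain ⟨_ | ⟨y', p'⟩, q', r', a', b', c', hab', hbc', hw', rfl⟩ := h'
    · rw [List.nil_append] at hw' ⊢
      rw [hw'] at hw
      exact _root_.symm (join_of_sylStep_cons_cons (by simp) hab' hbc'
        ⟨y :: p, q, r, a, b, c, hab, hbc, hw, rfl⟩)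
    simp only [List.cons_append, List.cons.injEq] at hw hw' ⊢
    obtain ⟨rfl, rfl⟩ := hw
    obtain ⟨rfl, hw'⟩ := hw'
    obtain ⟨d, hd, hd'⟩ := ih _ _ ⟨p, q, r, a, b, c, hab, hbc, rfl, rfl⟩
      ⟨p', q', r', a', b', c', hab', hbc', hw', rfl⟩
    have lift := Relation.ReflTransGen.lift (List.cons x) fun _ _ => SylStep.cons x
    exact ⟨x :: d, lift _ _ hd, lift _ _ hd'⟩

theorem exists_sylStep_of_sublist {a b c : ℕ} (hab : a ≤ b) (hbc : b < c) {w : List ℕ}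
    (h : [a, c, b] <+ w) : ∃ u, SylStep w u := by
  induction w generalizing a with
  | nil => simp at h
  | cons x w ih =>
    rcases h with _ | _ | ⟨_, hcb⟩
    · obtain ⟨u, hu⟩ := ih hab ‹_›
      exact ⟨x :: u, hu.cons x⟩
    rcases w with _ | ⟨y, w⟩
    · simp at hcb
    by_cases hy : y ≤ b
    · have hycb : [y, c, b] <+ y :: w := by
        rcases hcb with _ | _ | _
        · exact ‹[c, b] <+ w›.cons_cons y
        · omega
      obtain ⟨u, hu⟩ := ih hy hycb
      exact ⟨x :: u, hu.cons x⟩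
    · have hb : b ∈ w := by
        have : b ∈ y :: w := hcb.subset (by simp)
        exact (List.mem_cons.mp this).resolve_left (by omega)
      exact ⟨y :: x :: w, SylStep.of_mem [] hb hab (by omega)⟩

theorem avoidsSylPattern_iff_forall_not_sylStep {w : List ℕ} :
    AvoidsSylPattern w ↔ ∀ u, ¬ SylStep w u := by
  constructor
  · rintro hw u ⟨p, q, r, a, b, c, hab, hbc, rfl, -⟩
    refine hw a b c hab hbc (List.Sublist.trans ?_ (List.sublist_append_right p _))
    exact ((List.singleton_sublist.mpr (by simp)).cons_cons c).cons_cons a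
  · intro hw a b c hab hbc h
    obtain ⟨u, hu⟩ := exists_sylStep_of_sublist hab hbc h
    exact hw u hu

theorem low_append (s u : List ℕ) : low (s ++ u) = low s ++ (low u).map (s.foldr min) := by
  induction s with
  | nil => simp [low]
  | cons a s ih => simp [low, ih, Function.comp_def]

theorem lt_foldr_min_iff {α : Type*} [LinearOrder α] {b x : α} {s : List α} :
    b < s.foldr min x ↔ b < x ∧ ∀ a ∈ s, b < a := by
  induction s with
  | nil => simp
  | cons a s ih =>
    simp only [List.foldr_cons, lt_min_iff, ih, List.mem_cons, forall_eq_or_imp]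
    tauto

theorem exists_le_of_foldr_min_eq {α : Type*} [LinearOrder α] {b b' : α} {s : List α}
    (hbb' : b < b') (h : s.foldr min b = s.foldr min b') : ∃ a ∈ s, a ≤ b := by
  by_contra! hs
  have : b < s.foldr min b := h ▸ lt_foldr_min_iff.mpr ⟨hbb', hs⟩
  exact (lt_foldr_min_iff.mp this).1.false

theorem not_lt_of_low_eq {s r r' : List ℕ} {b b' : ℕ} (hv' : AvoidsSylPattern (s ++ b' :: r'))
    (hperm : (b :: r).Perm (b' :: r')) (hlow : low (s ++ b :: r) = low (s ++ b' :: r')) :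
    ¬ b < b' := by
  intro hbb'
  rw [low_append, low_append, List.append_cancel_left_eq] at hlow
  obtain ⟨a, has, hab⟩ :=
    exists_le_of_foldr_min_eq hbb' (List.head_eq_of_cons_eq (by simpa [low] using hlow))
  have hb : b ∈ r' := (List.mem_cons.mp (hperm.subset (by simp))).resolve_left hbb'.ne
  exact hv' a b b' hab hbb'
    ((List.singleton_sublist.mpr has).append ((List.singleton_sublist.mpr hb).cons_cons b'))

theorem eq_of_perm_of_low_append_eq (s : List ℕ) {t t' : List ℕ}
    (hv : AvoidsSylPattern (s ++ t)) (hv' : AvoidsSylPattern (s ++ t')) (hperm : t.Perm t')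
    (hlow : low (s ++ t) = low (s ++ t')) : t = t' := by
  induction t generalizing s t' with
  | nil => exact hperm.nil_eq
  | cons b r ih =>
    obtain ⟨b', r', rfl⟩ := List.exists_cons_of_length_eq_add_one hperm.length_eq.symm
    rcases lt_trichotomy b b' with hbb' | rfl | hbb'
    · exact absurd hbb' (not_lt_of_low_eq hv' hperm hlow)
    · rw [ih (s ++ [b]) (by simpa using hv) (by simpa using hv') (List.perm_cons b |>.mp hperm)
        (by simpa using hlow)]
    · exact absurd hbb' (not_lt_of_low_eq hv hperm.symm hlow.symm)

/-- Every sylvester class of words over positive integers contains exactly one word avoiding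
`aba` and `acb`; such a word is determined by its nonincreasing rearrangement (equivalently,
its multiset of letters) together with `low w`. -/
theorem stmt6 :
    (∀ w : List ℕ, (∀ a ∈ w, 0 < a) →
      ∃! v : List ℕ, Syl w v ∧ AvoidsABA v ∧ AvoidsACB v) ∧
    (∀ v v' : List ℕ, (∀ a ∈ v, 0 < a) → (∀ a ∈ v', 0 < a) →
      AvoidsABA v → AvoidsACB v → AvoidsABA v' → AvoidsACB v' →
      v.Perm v' → low v = low v' → v = v') := by
  refine ⟨fun w _ => ?_, fun v v' _ _ hv₁ hv₂ hv'₁ hv'₂ hperm hlow => ?_⟩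
  · simpa only [Syl, avoidsABA_and_avoidsACB_iff, avoidsSylPattern_iff_forall_not_sylStep] using
      Relation.existsUnique_eqvGen_forall_not wellFounded_flip_sylStep sylStep_locallyConfluent w
  · exact eq_of_perm_of_low_append_eq [] (avoidsABA_and_avoidsACB_iff.mp ⟨hv₁, hv₂⟩)
      (avoidsABA_and_avoidsACB_iff.mp ⟨hv'₁, hv'₂⟩) hperm hlow
end

section
/- Let w be a word over positive integers avoiding the patterns aba and acb. Then w can be uniquely reconstructed from the multiset of its letters together with the positions and values of its left-to-right minima: between consecutive left-to-right minima, the letters of w form a nondecreasing sequence consisting of the smallest available letters that are at least the preceding left-to-right minimum. -/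
/-- Position `i` carries a left-to-right minimum of `w`. -/
def IsLRMin (w : List ℕ) (i : ℕ) : Prop :=
  i < w.length ∧ ∀ j < i, w.getD i 0 < w.getD j 0

lemma comb {w : List ℕ} (h1 : AvoidsABA w) (h2 : AvoidsACB w) {i j k : ℕ}
    (hij : i < j) (hjk : j < k) (hk : k < w.length)
    (hik : w.getD i 0 ≤ w.getD k 0) (hkj : w.getD k 0 < w.getD j 0) : False := by
  rcases lt_or_eq_of_le hik with h | h
  · exact h2 i j k hij hjk hk ⟨h, hkj⟩
  · exact h1 i j k hij hjk hk ⟨h, hkj⟩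

lemma length_low : ∀ w : List ℕ, (low w).length = w.length
  | [] => rfl
  | a :: w => by simp [low, length_low w]

lemma low_getD_succ (a : ℕ) (w : List ℕ) (p : ℕ) (hp : p < w.length) :
    (low (a :: w)).getD (p + 1) 0 = min a ((low w).getD p 0) := by
  have h1 : p < ((low w).map (min a)).length := by
    simp [length_low]; exact hp
  have h2 : p < (low w).length := by rw [length_low]; exact hp
  simp only [low, List.getD_cons_succ]
  rw [List.getD_eq_getElem _ _ h1, List.getD_eq_getElem _ _ h2, List.getElem_map]

lemma low_le : ∀ (w : List ℕ) (p j : ℕ), j ≤ p → p < w.length →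
    (low w).getD p 0 ≤ w.getD j 0
  | [], p, j, _, hp => by simp at hp
  | a :: t, 0, j, hj, _ => by
    interval_cases j; simp [low]
  | a :: t, p + 1, j, hj, hp => by
    have hpt : p < t.length := by simpa using hp
    rw [low_getD_succ a t p hpt]
    cases j with
    | zero => simp
    | succ j =>
      have := low_le t p j (by omega) hpt
      simp only [List.getD_cons_succ]
      exact le_trans (min_le_right _ _) this

lemma low_eq_get : ∀ (w : List ℕ) (p : ℕ), p < w.length →
    ∃ m, m ≤ p ∧ (low w).getD p 0 = w.getD m 0
  | [], p, hp => by simp at hp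
  | a :: t, 0, _ => ⟨0, le_refl _, by simp [low]⟩
  | a :: t, p + 1, hp => by
    have hpt : p < t.length := by simpa using hp
    obtain ⟨m, hm, he⟩ := low_eq_get t p hpt
    rw [low_getD_succ a t p hpt]
    rcases le_total a ((low t).getD p 0) with h | h
    · exact ⟨0, by omega, by rw [min_eq_left h]; rfl⟩
    · exact ⟨m + 1, by omega, by rw [min_eq_right h, he]; rfl⟩

lemma smallest (w : List ℕ) (h1 : AvoidsABA w) (h2 : AvoidsACB w) (p q : ℕ)
    (hpq : p < q) (hq : q < w.length)
    (hl : (low w).getD p 0 ≤ w.getD q 0) : w.getD p 0 ≤ w.getD q 0 := by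
  by_contra hc
  push_neg at hc
  obtain ⟨m, hm, he⟩ := low_eq_get w p (hpq.trans hq)
  rw [he] at hl
  rcases eq_or_lt_of_le hm with rfl | hm'
  · omega
  · exact comb h1 h2 hm' hpq hq hl hc

lemma nondecr (w : List ℕ) (h1 : AvoidsABA w) (h2 : AvoidsACB w) (p q : ℕ)
    (hpq : p < q) (hq : q < w.length)
    (hmin : ∀ r, p < r → r ≤ q → ¬ IsLRMin w r) : w.getD p 0 ≤ w.getD q 0 := by
  by_contra hc
  push_neg at hc
  have hex : ∃ r, p < r ∧ r ≤ q ∧ w.getD r 0 < w.getD p 0 := ⟨q, hpq, le_refl _, hc⟩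
  classical
  obtain ⟨hr1, hr2, hr3⟩ := Nat.find_spec hex
  set r := Nat.find hex with hrdef
  have hrlen : r < w.length := lt_of_le_of_lt hr2 hq
  have hnot := hmin r hr1 hr2
  rw [IsLRMin] at hnot
  push_neg at hnot
  obtain ⟨j, hj, hj2⟩ := hnot hrlen
  rcases lt_trichotomy j p with h | h | h
  · exact comb h1 h2 h hr1 hrlen hj2 hr3
  · subst h; omega
  · have hjq : j ≤ q := le_trans (le_of_lt hj) hr2
    have := Nat.find_min hex hj
    push_neg at this
    have := this h hjq
    omega

lemma key (w w' : List ℕ) (h1' : AvoidsABA w') (h2' : AvoidsACB w')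
    (hperm : w.Perm w') (hiff : ∀ i, IsLRMin w i ↔ IsLRMin w' i)
    (hval : ∀ i, IsLRMin w i → w.getD i 0 = w'.getD i 0)
    (p : ℕ) (hp : p < w.length)
    (hpre : ∀ i < p, w.getD i 0 = w'.getD i 0)
    (hlt : w.getD p 0 < w'.getD p 0) : False := by
  have hlen : w.length = w'.length := hperm.length_eq
  have hp' : p < w'.length := hlen ▸ hp
  have htake : w.take p = w'.take p := by
    apply List.ext_getElem
    · simp [hlen]
    · intro i h₁ h₂
      have hi : i < p := by
        simp only [List.length_take] at h₁; omega
      have h := hpre i hi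
      rw [List.getD_eq_getElem _ _ (hi.trans hp), List.getD_eq_getElem _ _ (hi.trans hp')] at h
      simpa [List.getElem_take] using h
  have hdrop : (w.drop p).Perm (w'.drop p) := by
    have h := hperm
    rw [← List.take_append_drop p w, ← List.take_append_drop p w', htake] at h
    exact (List.perm_append_left_iff _).mp h
  have hmemw : w.getD p 0 ∈ w.drop p := by
    rw [List.getD_eq_getElem _ _ hp]
    have h0 : 0 < (w.drop p).length := by simp; omega
    have : w[p] = (w.drop p)[0]'h0 := by simp
    rw [this]
    exact List.getElem_mem h0
  have hmem : w.getD p 0 ∈ w'.drop p := hdrop.mem_iff.mp hmemw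
  obtain ⟨i, hi, hieq⟩ := List.getElem_of_mem hmem
  have hq' : p + i < w'.length := by
    simp only [List.length_drop] at hi; omega
  have hq_eq : w'.getD (p + i) 0 = w.getD p 0 := by
    rw [List.getD_eq_getElem _ _ hq', ← hieq]
    simp
  have hpq : p < p + i := by
    rcases Nat.eq_zero_or_pos i with rfl | h
    · rw [Nat.add_zero] at hq_eq; omega
    · omega
  have hnl : ¬ IsLRMin w p := by
    intro hmin
    exact absurd (hval p hmin) hlt.ne
  rw [IsLRMin] at hnl
  push_neg at hnl
  obtain ⟨j, hj, hjle⟩ := hnl hp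
  have hlow : (low w').getD p 0 ≤ w'.getD (p + i) 0 := by
    calc (low w').getD p 0 ≤ w'.getD j 0 := low_le w' p j (le_of_lt hj) hp'
    _ = w.getD j 0 := (hpre j hj).symm
    _ ≤ w.getD p 0 := hjle
    _ = w'.getD (p + i) 0 := hq_eq.symm
  have := smallest w' h1' h2' p (p + i) hpq hq' hlow
  omega

/-- A word avoiding `aba` and `acb` is nondecreasing between consecutive left-to-right
minima, consists there of the smallest available letters at least the preceding minimum,
and is uniquely reconstructed from its multiset of letters together with the positions and
values of its left-to-right minima. -/
theorem stmt7 (w : List ℕ) (hpos : ∀ a ∈ w, 0 < a)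
    (h1 : AvoidsABA w) (h2 : AvoidsACB w) :
    -- nondecreasing between consecutive left-to-right minima
    (∀ p q, p < q → q < w.length → (∀ r, p < r → r ≤ q → ¬ IsLRMin w r) →
      w.getD p 0 ≤ w.getD q 0) ∧
    -- smallest-available property: a non-minimum letter is at most any later letter that
    -- is at least the current left-to-right minimum
    (∀ p q, p < q → q < w.length → ¬ IsLRMin w p →
      (low w).getD p 0 ≤ w.getD q 0 → w.getD p 0 ≤ w.getD q 0) ∧
    -- uniqueness of the reconstruction
    (∀ w' : List ℕ, (∀ a ∈ w', 0 < a) → AvoidsABA w' → AvoidsACB w' →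
      w.Perm w' →
      (∀ i, IsLRMin w i ↔ IsLRMin w' i) →
      (∀ i, IsLRMin w i → w.getD i 0 = w'.getD i 0) →
      w = w') := by
  refine ⟨fun p q hpq hq hm => nondecr w h1 h2 p q hpq hq hm,
    fun p q hpq hq _ hl => smallest w h1 h2 p q hpq hq hl,
    fun w' hpos' h1' h2' hperm hiff hval => ?_⟩
  classical
  have hlen : w.length = w'.length := hperm.length_eq
  by_contra hne
  have hex : ∃ p, w.getD p 0 ≠ w'.getD p 0 := by
    by_contra hall
    push_neg at hall
    apply hne
    apply List.ext_getElem hlen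
    intro i h₁ h₂
    have h := hall i
    rwa [List.getD_eq_getElem _ _ h₁, List.getD_eq_getElem _ _ h₂] at h
  have hp := Nat.find_spec hex
  set p := Nat.find hex with hpdef
  have hpre : ∀ i < p, w.getD i 0 = w'.getD i 0 := by
    intro i hi
    have := Nat.find_min hex hi
    push_neg at this
    exact this
  have hplen : p < w.length := by
    by_contra h
    push_neg at h
    apply hp
    rw [List.getD_eq_default _ _ h, List.getD_eq_default _ _ (by omega)]
  rcases lt_trichotomy (w.getD p 0) (w'.getD p 0) with h | h | h
  · exact key w w' h1' h2' hperm hiff hval p hplen hpre h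
  · exact hp h
  · exact key w' w h1 h2 hperm.symm (fun i => (hiff i).symm)
      (fun i hm => (hval i ((hiff i).mpr hm)).symm) p (hlen ▸ hplen)
      (fun i hi => (hpre i hi).symm) h
end

section
/- With K(x,y) = 1 - tx - txy^2/((x-y)(y-1)), and I_0(x) = 1/(1-tx) - 1/(tx^2) + (1+t)/(tx) + x(1-t) - tx^2, J_0(y) = -t/(y-1)^2 + (1-t)/(y-1) - 1/(ty^2) + (1+t)/(ty) + y, one has the identity (I_0(x) - J_0(y))/K(x,y) = (x-y)(1-y+txy)(x+y-xy-xyt(1+x-xy)) / (x^2 y^2 t (xt-1)(y-1)) as rational functions. -/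
/-!
Write the kernel as `K = N / ((x - y)(y - 1))` with `N = (1 - tx)(x - y)(y - 1) - txy²`.
Clearing denominators, `I₀(x) - J₀(y) = K · R` with `R` the claimed right-hand side is a
polynomial identity, so `N` divides the numerator of `I₀(x) - J₀(y)`. Dividing by `K` is
legitimate because `N` is nonzero in `ℚ(t,x,y)`: it specialises to `-(1 - tx)x` at `y = 0`.
-/

/-- The field `ℚ(t, x, y)` of rational functions in three variables. -/
noncomputable abbrev RF : Type := RatFunc (RatFunc (RatFunc ℚ))

/-- The variable `t`. -/
noncomputable def tF : RF := RatFunc.C (RatFunc.C RatFunc.X)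
/-- The variable `x`. -/
noncomputable def xF : RF := RatFunc.C RatFunc.X
/-- The variable `y`. -/
noncomputable def yF : RF := RatFunc.X

/-- The kernel `K(x,y)`. -/
noncomputable def KerXY : RF :=
  1 - tF * xF - tF * xF * yF ^ 2 / ((xF - yF) * (yF - 1))

/-- The rational invariant `I₀(x)`. -/
noncomputable def I0 : RF :=
  1 / (1 - tF * xF) - 1 / (tF * xF ^ 2) + (1 + tF) / (tF * xF) +
    xF * (1 - tF) - tF * xF ^ 2

/-- The rational invariant `J₀(y)`. -/
noncomputable def J0 : RF :=
  -tF / (yF - 1) ^ 2 + (1 - tF) / (yF - 1) - 1 / (tF * yF ^ 2) +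
    (1 + tF) / (tF * yF) + yF

namespace RatFunc

open Polynomial

variable {K : Type*} [Field K]

theorem algebraMap_ne_zero_of_eval_ne_zero {p : K[X]} {a : K} (h : p.eval a ≠ 0) :
    algebraMap K[X] (RatFunc K) p ≠ 0 :=
  algebraMap_ne_zero fun hp => h (by simp [hp])

theorem one_sub_C_mul_X_ne_zero (a : K) : (1 - C a * X : RatFunc K) ≠ 0 := by
  have h := algebraMap_ne_zero_of_eval_ne_zero (p := 1 - Polynomial.C a * Polynomial.X)
    (a := 0) (by simp)
  simpa [algebraMap_C, algebraMap_X] using h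

theorem X_sub_one_ne_zero : (X - 1 : RatFunc K) ≠ 0 := by
  have h := algebraMap_ne_zero_of_eval_ne_zero (p := Polynomial.X - 1) (a := (0 : K)) (by simp)
  simpa [algebraMap_X] using h

theorem C_sub_X_ne_zero {a : K} (ha : a ≠ 0) : (C a - X : RatFunc K) ≠ 0 := by
  have h := algebraMap_ne_zero_of_eval_ne_zero (p := Polynomial.C a - Polynomial.X) (a := 0)
    (by simpa using ha)
  simpa [algebraMap_C, algebraMap_X] using h

theorem kernel_numerator_ne_zero {t x : K} (hx : x ≠ 0) (htx : 1 - t * x ≠ 0) :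
    ((1 - C t * C x) * (C x - X) * (X - 1) - C t * C x * X ^ 2 : RatFunc K) ≠ 0 := by
  have h := algebraMap_ne_zero_of_eval_ne_zero (a := 0)
    (p := (1 - Polynomial.C t * Polynomial.C x) * (Polynomial.C x - Polynomial.X) *
      (Polynomial.X - 1) - Polynomial.C t * Polynomial.C x * Polynomial.X ^ 2)
    (by simpa using And.intro htx hx)
  simpa [algebraMap_C, algebraMap_X] using h

end RatFunc

section Field

variable {K : Type*} [Field K] {t x y : K}

theorem kernel_eq_div (hxy : x - y ≠ 0) (hy1 : y - 1 ≠ 0) :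
    1 - t * x - t * x * y ^ 2 / ((x - y) * (y - 1)) =
      ((1 - t * x) * (x - y) * (y - 1) - t * x * y ^ 2) / ((x - y) * (y - 1)) := by
  field_simp

theorem kernel_ne_zero (hxy : x - y ≠ 0) (hy1 : y - 1 ≠ 0)
    (hN : (1 - t * x) * (x - y) * (y - 1) - t * x * y ^ 2 ≠ 0) :
    1 - t * x - t * x * y ^ 2 / ((x - y) * (y - 1)) ≠ 0 := by
  rw [kernel_eq_div hxy hy1]
  exact div_ne_zero hN (mul_ne_zero hxy hy1)

theorem invariant_sub_eq_kernel_mul (ht : t ≠ 0) (hx : x ≠ 0) (hy : y ≠ 0)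
    (htx : 1 - t * x ≠ 0) (hy1 : y - 1 ≠ 0) (hxy : x - y ≠ 0) :
    (1 / (1 - t * x) - 1 / (t * x ^ 2) + (1 + t) / (t * x) + x * (1 - t) - t * x ^ 2) -
        (-t / (y - 1) ^ 2 + (1 - t) / (y - 1) - 1 / (t * y ^ 2) + (1 + t) / (t * y) + y) =
      (1 - t * x - t * x * y ^ 2 / ((x - y) * (y - 1))) *
        ((x - y) * (1 - y + t * x * y) * (x + y - x * y - x * y * t * (1 + x - x * y)) /
          (x ^ 2 * y ^ 2 * t * (x * t - 1) * (y - 1))) := by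
  rw [kernel_eq_div hxy hy1, show x * t - 1 = -(1 - t * x) by ring]
  field_simp
  ring

theorem invariant_sub_div_kernel_eq (ht : t ≠ 0) (hx : x ≠ 0) (hy : y ≠ 0)
    (htx : 1 - t * x ≠ 0) (hy1 : y - 1 ≠ 0) (hxy : x - y ≠ 0)
    (hN : (1 - t * x) * (x - y) * (y - 1) - t * x * y ^ 2 ≠ 0) :
    ((1 / (1 - t * x) - 1 / (t * x ^ 2) + (1 + t) / (t * x) + x * (1 - t) - t * x ^ 2) -
        (-t / (y - 1) ^ 2 + (1 - t) / (y - 1) - 1 / (t * y ^ 2) + (1 + t) / (t * y) + y)) /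
        (1 - t * x - t * x * y ^ 2 / ((x - y) * (y - 1))) =
      (x - y) * (1 - y + t * x * y) * (x + y - x * y - x * y * t * (1 + x - x * y)) /
        (x ^ 2 * y ^ 2 * t * (x * t - 1) * (y - 1)) := by
  rw [invariant_sub_eq_kernel_mul ht hx hy htx hy1 hxy,
    mul_div_cancel_left₀ _ (kernel_ne_zero hxy hy1 hN)]

end Field

/-- The identity `(I₀(x) - J₀(y))/K(x,y) = (x-y)(1-y+txy)(x+y-xy-xyt(1+x-xy)) /
(x²y²t(xt-1)(y-1))` in `ℚ(t,x,y)`. -/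
theorem stmt16 :
    (I0 - J0) / KerXY =
      (xF - yF) * (1 - yF + tF * xF * yF) *
          (xF + yF - xF * yF - xF * yF * tF * (1 + xF - xF * yF)) /
        (xF ^ 2 * yF ^ 2 * tF * (xF * tF - 1) * (yF - 1)) := by
  have ht : tF ≠ 0 := (map_ne_zero RatFunc.C).mpr ((map_ne_zero RatFunc.C).mpr RatFunc.X_ne_zero)
  have hx : xF ≠ 0 := (map_ne_zero RatFunc.C).mpr RatFunc.X_ne_zero
  have htx : 1 - tF * xF ≠ 0 := by
    simpa only [tF, xF, map_sub, map_one, map_mul] using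
      (map_ne_zero RatFunc.C).mpr (RatFunc.one_sub_C_mul_X_ne_zero (RatFunc.X : RatFunc ℚ))
  have hy : yF ≠ 0 := RatFunc.X_ne_zero
  have hy1 : yF - 1 ≠ 0 := RatFunc.X_sub_one_ne_zero (K := RatFunc (RatFunc ℚ))
  have hxy : xF - yF ≠ 0 := RatFunc.C_sub_X_ne_zero (K := RatFunc (RatFunc ℚ)) RatFunc.X_ne_zero
  have hN : (1 - tF * xF) * (xF - yF) * (yF - 1) - tF * xF * yF ^ 2 ≠ 0 :=
    RatFunc.kernel_numerator_ne_zero (t := RatFunc.C (RatFunc.X : RatFunc ℚ)) RatFunc.X_ne_zero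
      (RatFunc.one_sub_C_mul_X_ne_zero _)
  exact invariant_sub_div_kernel_eq (t := tF) (x := xF) (y := yF) ht hx hy htx hy1 hxy hN
end

section
/- For every integer m ≥ 2, the polynomial (m^2+3) v^8 + 4 v^6 + 2(m^2+1) v^4 + 4 v^2 + m^2 + 3 has no root that is a root of unity. Consequently, with c = -√((m^2+2-√(m^2+4))/(2m^2+6)), the quantity arccos(-c)/π is irrational. -/
open Polynomial in
lemma stmt18_aux (m : ℕ) (hm : 2 ≤ m) (z : ℂ) (k : ℕ) (hk : 0 < k) (hzk : z ^ k = 1) :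
    ((m : ℂ) ^ 2 + 3) * z ^ 8 + 4 * z ^ 6 + 2 * ((m : ℂ) ^ 2 + 1) * z ^ 4 +
        4 * z ^ 2 + ((m : ℂ) ^ 2 + 3) ≠ 0 := by
  intro hP
  have hz0 : z ≠ 0 := by
    intro h; rw [h, zero_pow hk.ne'] at hzk; exact zero_ne_one hzk
  have hzinv : z⁻¹ = z ^ (k - 1) := by
    apply inv_eq_of_mul_eq_one_right
    rw [← pow_succ']
    have : k - 1 + 1 = k := by omega
    rw [this, hzk]
  set n : ℂ := (m : ℂ) ^ 2 + 3 with hndef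
  set t : ℂ := z ^ 2 + (z ^ 2)⁻¹ with htdef
  have hz2 : (z:ℂ) ^ 2 ≠ 0 := pow_ne_zero _ hz0
  have h1 : z ^ 2 * (z ^ 2)⁻¹ = 1 := mul_inv_cancel₀ hz2
  have ht : n * t ^ 2 + 4 * t - 4 = 0 := by
    rw [htdef, hndef]
    linear_combination ((z^2)⁻¹^2) * hP +
      ((-((((m:ℂ)^2+3))*(z^2)^3 + 4*(z^2)^2 + (2*((m:ℂ)^2+3)-4)*(z^2) + 4))*((z^2)⁻¹)
        - ((((m:ℂ)^2+3))*(z^2)^2 + 4*(z^2) - 4)) * h1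
  -- t is an algebraic integer
  have hzint : IsIntegral ℤ z := by
    refine ⟨X ^ k - 1, ?_, ?_⟩
    · simpa using monic_X_pow_sub_C (1:ℤ) hk.ne'
    · simp [hzk]
  have hint : IsIntegral ℤ t := by
    have h2 : IsIntegral ℤ ((z ^ 2)⁻¹) := by
      rw [← inv_pow, hzinv, ← pow_mul]
      exact hzint.pow _
    exact (hzint.pow 2).add h2
  -- t is irrational
  have htQ : ∀ q : ℚ, t ≠ (q : ℂ) := by
    intro q hq
    have h2 : ((m : ℂ) ^ 2 + 3) * (q:ℂ) ^ 2 + 4 * (q:ℂ) - 4 = 0 := by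
      rw [hndef] at ht; rw [← hq]; exact ht
    have h3 : ((m : ℚ) ^ 2 + 3) * q ^ 2 + 4 * q - 4 = 0 := by exact_mod_cast h2
    have h4 : ((((m : ℚ) ^ 2 + 3) * q + 2)/2) ^ 2 = ((m^2 + 4 : ℕ) : ℚ) := by
      push_cast
      linear_combination (((m:ℚ)^2+3)/4) * h3
    have h5 : Irrational (Real.sqrt ((m^2+4 : ℕ) : ℝ)) := by
      rw [irrational_sqrt_natCast_iff]
      rintro ⟨j, hj⟩
      have h6 : m < j := by nlinarith
      nlinarith
    apply h5
    set r : ℚ := (((m : ℚ) ^ 2 + 3) * q + 2)/2 with hrdef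
    refine ⟨|r|, ?_⟩
    have h7 : ((|r| : ℚ) : ℝ) ^ 2 = ((m^2+4 : ℕ) : ℝ) := by
      rw [Rat.cast_abs, ← abs_pow]
      have : ((r:ℝ)) ^ 2 = ((m^2+4:ℕ):ℝ) := by exact_mod_cast h4
      rw [this, abs_of_nonneg (by positivity)]
    rw [← h7, Real.sqrt_sq (by positivity)]
  rw [hndef] at ht
  set nq : ℚ := (m : ℚ) ^ 2 + 3 with hnq
  have hnq0 : nq ≠ 0 := by positivity
  have hne : ((m:ℂ)^2+3) ≠ 0 := by
    have h0 : ((m^2+3 : ℕ) : ℂ) ≠ 0 := Nat.cast_ne_zero.mpr (by positivity)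
    intro h; apply h0; rw [← h]; push_cast; ring
  have hnC : ((nq : ℚ) : ℂ) = (m:ℂ)^2+3 := by rw [hnq]; push_cast; ring
  set g : ℚ[X] := X ^ 2 + (C (4/nq) * X + C (-(4/nq))) with hgdef
  have hgm : g.Monic := by
    apply monic_X_pow_add
    apply lt_of_le_of_lt (degree_add_le _ _)
    apply max_lt
    · exact lt_of_le_of_lt (degree_C_mul_X_le _) (by norm_num)
    · exact lt_of_le_of_lt (degree_C_le) (by norm_num)
  have hgd : g.natDegree = 2 := by
    rw [hgdef]; compute_degree!
  have hgt : aeval t g = 0 := by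
    have h4 : ((4/nq : ℚ) : ℂ) = 4 / ((m:ℂ)^2+3) := by
      rw [Rat.cast_div, hnC]; norm_num
    rw [hgdef]
    simp only [map_add, map_mul, map_pow, aeval_X, aeval_C, map_neg]
    rw [show (algebraMap ℚ ℂ) (4/nq) = ((4/nq:ℚ):ℂ) from rfl, h4]
    field_simp
    linear_combination ht
  have hdvd : minpoly ℚ t ∣ g := minpoly.dvd ℚ t hgt
  have hintQ : IsIntegral ℚ t := hint.tower_top
  have hdegle : (minpoly ℚ t).natDegree ≤ 2 := by
    have h5 := natDegree_le_of_dvd hdvd hgm.ne_zero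
    rwa [hgd] at h5
  have hdegpos : 0 < (minpoly ℚ t).natDegree := minpoly.natDegree_pos hintQ
  have hdeg2 : (minpoly ℚ t).natDegree = 2 := by
    rcases Nat.lt_or_ge (minpoly ℚ t).natDegree 2 with h | h
    · exfalso
      have h1 : (minpoly ℚ t).natDegree = 1 := by omega
      have heq := (minpoly.monic hintQ).eq_X_add_C h1
      have h2 := minpoly.aeval ℚ t
      rw [heq] at h2
      simp only [map_add, aeval_X, aeval_C] at h2
      rw [eq_ratCast (algebraMap ℚ ℂ)] at h2
      exact htQ (-((minpoly ℚ t).coeff 0)) (by push_cast; linear_combination h2)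
    · omega
  have hgeq : g = minpoly ℚ t :=
    eq_of_monic_of_dvd_of_natDegree_le (minpoly.monic hintQ) hgm hdvd (by rw [hgd, hdeg2])
  have hmap : (minpoly ℤ t).map (algebraMap ℤ ℚ) = g :=
    ((minpoly.isIntegrallyClosed_eq_field_fractions' ℚ hint).symm).trans hgeq.symm
  have hc1 : (((minpoly ℤ t).coeff 1 : ℤ) : ℚ) = 4/nq := by
    have h6 := congrArg (fun p => p.coeff 1) hmap
    simpa [coeff_map, hgdef, coeff_X_pow] using h6
  have h7 : ((m^2+3 : ℤ) : ℚ) * (((minpoly ℤ t).coeff 1 : ℤ) : ℚ) = 4 := by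
    rw [hc1, hnq]
    push_cast
    field_simp
  have h8 : (m^2+3 : ℤ) * ((minpoly ℤ t).coeff 1) = 4 := by exact_mod_cast h7
  have h9 : (m^2+3 : ℤ) ≤ 4 := Int.le_of_dvd (by norm_num) ⟨_, h8.symm⟩
  have hm' : (2:ℤ) ≤ (m:ℤ) := by exact_mod_cast hm
  nlinarith

lemma stmt18_aux2 (m : ℕ) (hm : 2 ≤ m) :
    Irrational (Real.arccos (-(-Real.sqrt (((m : ℝ) ^ 2 + 2 - Real.sqrt ((m : ℝ) ^ 2 + 4)) /
        (2 * (m : ℝ) ^ 2 + 6)))) / Real.pi) := by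
  set D : ℝ := (m : ℝ) ^ 2 + 4 with hDdef
  set A : ℝ := (m : ℝ) ^ 2 + 2 with hAdef
  set a : ℝ := (A - Real.sqrt D) / (2 * (m : ℝ) ^ 2 + 6) with hadef
  rw [neg_neg]
  set s : ℝ := Real.sqrt D with hsdef
  have hD0 : (0:ℝ) ≤ D := by rw [hDdef]; positivity
  have hs0 : 0 ≤ s := Real.sqrt_nonneg _
  have hs2 : s ^ 2 = D := Real.sq_sqrt hD0
  have hsA : s ≤ A := by
    rw [hsdef, hAdef, show ((m:ℝ)^2+2) = Real.sqrt (((m:ℝ)^2+2)^2) from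
      (Real.sqrt_sq (by positivity)).symm]
    apply Real.sqrt_le_sqrt
    rw [hDdef]
    nlinarith [sq_nonneg (m:ℝ)]
  have ha0 : 0 ≤ a := by
    rw [hadef]
    apply div_nonneg (by linarith) (by positivity)
  have ha1 : a ≤ 1 := by
    rw [hadef, div_le_one (by positivity)]
    rw [hAdef]
    nlinarith [sq_nonneg (m:ℝ)]
  have hr0 : 0 ≤ Real.sqrt a := Real.sqrt_nonneg _
  have hr1 : Real.sqrt a ≤ 1 := Real.sqrt_le_one.mpr ha1
  set θ : ℝ := Real.arccos (Real.sqrt a) with hθdef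
  have hcosθ : Real.cos θ = Real.sqrt a := Real.cos_arccos (by linarith) hr1
  -- the quartic satisfied by c := -√a (we use √a; even powers only)
  have hc4 : 4 * ((m:ℝ)^2+3) * (Real.sqrt a)^4 - 4 * A * (Real.sqrt a)^2 + (m:ℝ)^2 = 0 := by
    have hsq : (Real.sqrt a)^2 = a := Real.sq_sqrt ha0
    have hsq4 : (Real.sqrt a)^4 = a^2 := by rw [show 4 = 2*2 from rfl, pow_mul, hsq]
    rw [hsq, hsq4, hadef, hAdef]
    have hden : (2*(m:ℝ)^2+6) ≠ 0 := by positivity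
    field_simp
    rw [hDdef] at hs2
    nlinarith [hs2]
  rintro ⟨q, hq⟩
  have hπ : Real.pi ≠ 0 := Real.pi_ne_zero
  have hθq : θ = (q:ℝ) * Real.pi := by
    field_simp at hq
    linarith [hq]
  -- the root of unity
  set z : ℂ := Complex.exp ((↑(Real.pi - θ)) * Complex.I) with hzdef
  have hz0 : z ≠ 0 := Complex.exp_ne_zero _
  have hqden : (q.den : ℝ) * (q : ℝ) = (q.num : ℝ) := by
    have h := Rat.num_div_den q
    have hd : ((q.den : ℝ)) ≠ 0 := by
      exact_mod_cast Nat.cast_ne_zero.mpr q.den_nz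
    rw [show ((q:ℝ)) = ((q.num:ℝ))/((q.den:ℝ)) by exact_mod_cast congrArg Rat.cast h.symm]
    field_simp
  have hroot : z ^ (2 * q.den) = 1 := by
    rw [hzdef, ← Complex.exp_nat_mul]
    rw [show ((2 * q.den : ℕ) : ℂ) * ((↑(Real.pi - θ)) * Complex.I)
        = ((q.den - q.num : ℤ) : ℂ) * (2 * Real.pi * Complex.I) by
      push_cast
      rw [show (θ:ℝ) = (q:ℝ) * Real.pi from hθq]
      push_cast
      have h9 : ((q.den:ℂ)) * ((q:ℝ):ℂ) = ((q.num:ℂ)) := by exact_mod_cast congrArg Complex.ofReal hqden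
      push_cast at h9
      linear_combination (-2 * (Real.pi:ℂ) * Complex.I) * h9]
    exact Complex.exp_int_mul_two_pi_mul_I _
  -- z is a root of the degree-8 polynomial
  have hsum : z + z⁻¹ = 2 * ((Real.cos (Real.pi - θ) : ℝ) : ℂ) := by
    rw [hzdef, ← Complex.exp_neg]
    rw [Complex.exp_mul_I, ← neg_mul, Complex.exp_mul_I]
    rw [Complex.cos_neg, Complex.sin_neg]
    rw [← Complex.ofReal_cos]
    ring
  have hcosval : Real.cos (Real.pi - θ) = -Real.sqrt a := by
    rw [Real.cos_pi_sub, hcosθ]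
  have hz2c : z ^ 2 + 1 = 2 * ((-Real.sqrt a : ℝ) : ℂ) * z := by
    have := hsum
    rw [hcosval] at this
    have h2 : z * (z + z⁻¹) = z * (2 * ((-Real.sqrt a : ℝ) : ℂ)) := by rw [this]
    field_simp at h2
    push_cast at h2 ⊢
    linear_combination h2
  have hPz : ((m : ℂ) ^ 2 + 3) * z ^ 8 + 4 * z ^ 6 + 2 * ((m : ℂ) ^ 2 + 1) * z ^ 4 +
      4 * z ^ 2 + ((m : ℂ) ^ 2 + 3) = 0 := by
    have hc4C : 4 * ((m:ℂ)^2+3) * (((-Real.sqrt a : ℝ):ℂ))^4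
        - 4 * (((A:ℝ):ℂ)) * (((-Real.sqrt a : ℝ):ℂ))^2 + (m:ℂ)^2 = 0 := by
      have := congrArg (Complex.ofReal) hc4
      push_cast at this ⊢
      linear_combination this
    set cC : ℂ := ((-Real.sqrt a : ℝ) : ℂ)
    have hAC : ((A:ℝ):ℂ) = (m:ℂ)^2 + 2 := by rw [hAdef]; push_cast; ring
    rw [hAC] at hc4C
    linear_combination (((m:ℂ)^2+3) * ((z^2+1) + 2*cC*z) * ((z^2+1)^2 + (2*cC*z)^2)
      - 4*((m:ℂ)^2+2)*z^2*((z^2+1) + 2*cC*z)) * hz2c + 4*z^4 * hc4C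
  exact stmt18_aux m hm z (2 * q.den) (by positivity) hroot hPz

/-- For `m ≥ 2`, the polynomial `(m²+3)v⁸ + 4v⁶ + 2(m²+1)v⁴ + 4v² + m²+3` has no root
of unity among its roots; consequently, with
`c = -√((m²+2-√(m²+4))/(2m²+6))`, the quantity `arccos(-c)/π` is irrational. -/
theorem stmt18 (m : ℕ) (hm : 2 ≤ m) :
    (∀ z : ℂ, (∃ k : ℕ, 0 < k ∧ z ^ k = 1) →
      ((m : ℂ) ^ 2 + 3) * z ^ 8 + 4 * z ^ 6 + 2 * ((m : ℂ) ^ 2 + 1) * z ^ 4 +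
          4 * z ^ 2 + ((m : ℂ) ^ 2 + 3) ≠ 0) ∧
    (let c : ℝ := -Real.sqrt (((m : ℝ) ^ 2 + 2 - Real.sqrt ((m : ℝ) ^ 2 + 4)) /
        (2 * (m : ℝ) ^ 2 + 6));
      Irrational (Real.arccos (-c) / Real.pi)) := by
  constructor
  · rintro z ⟨k, hk, hzk⟩
    exact stmt18_aux m hm z k hk hzk
  · exact stmt18_aux2 m hm
end

section
/- For every integer m ≥ 2, the polynomial (3m^2+1) v^8 + 4m^2 v^6 + 2(m^2+1) v^4 + 4m^2 v^2 + 3m^2 + 1 has no root that is a root of unity. Consequently, with c = -√((1+2m^2-m√(1+4m^2))/(2(3m^2+1))), the quantity arccos(-c)/π is irrational. -/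
/-! If `z` is a root of unity, so is `v = z ^ 2`, and `β = v + v⁻¹` is an algebraic integer.
Dividing the palindromic octic by `z ^ 4` shows that `β` is a root of the quadratic
`(3m² + 1) x² + 4m² x - 4m²`. The minimal polynomial of `β` over `ℤ` divides this quadratic, so
either `β` is a rational integer, which the quadratic does not allow, or the minimal polynomial
is the quadratic divided by its leading coefficient, forcing `3m² + 1 ∣ 4m²`, false for `m ≥ 2`.

If `θ = arccos (-c) = qπ` with `q` rational, then `v = exp (2πiq)` is a root of unity with
`v + v⁻¹ = 2 cos 2θ = 4c² - 2`, and `4c² - 2` is a root of the same quadratic. -/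

open Polynomial

theorem IsIntegral.exists_eq_algebraMap_or_dvd_of_quadratic {R K : Type*} [CommRing R] [IsDomain R]
    [IsIntegrallyClosed R] [CommRing K] [IsDomain K] [Algebra R K] [Module.IsTorsionFree R K]
    {x : K} (hx : IsIntegral R x) {a b c : R} (ha : a ≠ 0)
    (h : algebraMap R K a * x ^ 2 + algebraMap R K b * x + algebraMap R K c = 0) :
    (∃ n : R, x = algebraMap R K n) ∨ a ∣ b := by
  set P : R[X] := C a * X ^ 2 + C b * X + C c
  have hPx : aeval x P = 0 := by simpa [P] using h
  have hP2 : P.coeff 2 = a := by simp [P]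
  have hP1 : P.coeff 1 = b := by simp [P]
  have hPdeg : P.natDegree ≤ 2 := natDegree_quadratic_le
  have hP0 : P ≠ 0 := fun h0 => ha (by rw [← hP2, h0, coeff_zero])
  have hdvd := minpoly.isIntegrallyClosed_dvd hx hPx
  have hmon := minpoly.monic hx
  have hdeg : (minpoly R x).natDegree ≤ 2 := (natDegree_le_of_dvd hdvd hP0).trans hPdeg
  obtain hdeg1 | hdeg2 : (minpoly R x).natDegree = 1 ∨ (minpoly R x).natDegree = 2 := by
    have := minpoly.natDegree_pos hx; omega
  · left
    refine ⟨-(minpoly R x).coeff 0, ?_⟩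
    have hroot := minpoly.aeval R x
    rw [hmon.eq_X_add_C hdeg1] at hroot
    simp only [map_add, aeval_X, aeval_C] at hroot
    rw [map_neg]
    exact eq_neg_of_add_eq_zero_left hroot
  · right
    obtain ⟨r, hr⟩ := hdvd
    have hr0 : r ≠ 0 := by rintro rfl; exact hP0 (by rw [hr, mul_zero])
    have hrdeg : r.natDegree = 0 := by
      have hmul := natDegree_mul hmon.ne_zero hr0
      rw [← hr] at hmul
      omega
    rw [eq_C_of_natDegree_eq_zero hrdeg] at hr
    have h2 := congrArg (coeff · 2) hr
    have h1 := congrArg (coeff · 1) hr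
    simp only [coeff_mul_C, hP2, hP1] at h2 h1
    rw [← hdeg2, hmon.coeff_natDegree, one_mul] at h2
    exact ⟨(minpoly R x).coeff 1, by rw [h1, h2, mul_comm]⟩

theorem isIntegral_of_pow_eq_one {R B : Type*} [CommRing R] [Ring B] [Algebra R B] {x : B}
    {k : ℕ} (hk : 0 < k) (hx : x ^ k = 1) : IsIntegral R x :=
  IsIntegral.of_pow hk (hx ▸ isIntegral_one)

theorem Complex.exp_rat_mul_two_pi_mul_I_pow_den (q : ℚ) :
    Complex.exp (q * (2 * Real.pi * Complex.I)) ^ q.den = 1 := by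
  rw [← Complex.exp_nat_mul, ← mul_assoc, ← Complex.exp_int_mul_two_pi_mul_I q.num]
  congr 2
  exact_mod_cast (mul_comm _ _).trans (Rat.mul_den_eq_num q)

-- The square `c ^ 2` of the quantity `c` of the statement.
noncomputable def walkCosSq (m : ℝ) : ℝ :=
  (1 + 2 * m ^ 2 - m * √(1 + 4 * m ^ 2)) / (2 * (3 * m ^ 2 + 1))

theorem walkCosSq_mem_Icc (m : ℝ) : walkCosSq m ∈ Set.Icc 0 1 := by
  have hS := Real.sq_sqrt (by positivity : (0 : ℝ) ≤ 1 + 4 * m ^ 2)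
  unfold walkCosSq
  constructor
  · apply div_nonneg _ (by positivity)
    nlinarith [sq_nonneg (m * √(1 + 4 * m ^ 2) - 1 - 2 * m ^ 2)]
  · rw [div_le_one (by positivity)]
    nlinarith [sq_nonneg (m * √(1 + 4 * m ^ 2) + 1 + 4 * m ^ 2)]

theorem walk_quadratic_walkCosSq (m : ℝ) :
    (3 * m ^ 2 + 1) * (4 * walkCosSq m - 2) ^ 2 + 4 * m ^ 2 * (4 * walkCosSq m - 2)
      - 4 * m ^ 2 = 0 := by
  have hS := Real.sq_sqrt (by positivity : (0 : ℝ) ≤ 1 + 4 * m ^ 2)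
  unfold walkCosSq
  generalize √(1 + 4 * m ^ 2) = S at hS ⊢
  field_simp
  linear_combination (16 * m ^ 2) * hS

section WalkQuadratic

variable {m : ℕ}

theorem walk_quadratic_int_ne_zero (hm : 0 < m) (n : ℤ) :
    (3 * (m : ℤ) ^ 2 + 1) * n ^ 2 + 4 * (m : ℤ) ^ 2 * n - 4 * (m : ℤ) ^ 2 ≠ 0 := by
  have hm1 : (1 : ℤ) ≤ (m : ℤ) ^ 2 := one_le_pow₀ (by omega)
  obtain hn | rfl | rfl | hn : n ≤ -2 ∨ n = -1 ∨ n = 0 ∨ 1 ≤ n := by omega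
  · have h2 : (0 : ℤ) ≤ (-n - 2) * ((-n - 2) * (3 * (m : ℤ) ^ 2 + 1) + 2 * (m : ℤ) ^ 2 + 2) :=
      mul_nonneg (by omega) (by nlinarith)
    nlinarith
  all_goals nlinarith

theorem not_walk_leadCoeff_dvd (hm : 2 ≤ m) : ¬ (3 * (m : ℤ) ^ 2 + 1) ∣ 4 * (m : ℤ) ^ 2 := by
  have hm4 : (4 : ℤ) ≤ (m : ℤ) ^ 2 := by nlinarith [(by exact_mod_cast hm : (2 : ℤ) ≤ m)]
  rintro ⟨k, hk⟩
  obtain hk1 | hk2 : k ≤ 1 ∨ 2 ≤ k := by omega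
  all_goals nlinarith

theorem walk_quadratic_ne_zero_of_pow_eq_one (hm : 2 ≤ m) {v : ℂ} {k : ℕ} (hk : 0 < k)
    (hv : v ^ k = 1) :
    (3 * (m : ℂ) ^ 2 + 1) * (v + v⁻¹) ^ 2 + 4 * (m : ℂ) ^ 2 * (v + v⁻¹) - 4 * (m : ℂ) ^ 2 ≠ 0 := by
  intro h
  have hint : IsIntegral ℤ (v + v⁻¹) := (isIntegral_of_pow_eq_one hk hv).add
    (isIntegral_of_pow_eq_one hk (by rw [inv_pow, hv, inv_one]))
  obtain ⟨n, hn⟩ | hdvd := hint.exists_eq_algebraMap_or_dvd_of_quadratic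
    (a := 3 * (m : ℤ) ^ 2 + 1) (b := 4 * (m : ℤ) ^ 2) (c := -(4 * (m : ℤ) ^ 2)) (by positivity)
    (by simp only [eq_intCast]; push_cast; linear_combination h)
  · rw [hn, eq_intCast] at h
    exact walk_quadratic_int_ne_zero (by omega : 0 < m) n (by exact_mod_cast h)
  · exact not_walk_leadCoeff_dvd hm hdvd

theorem walk_octic_ne_zero_of_pow_eq_one (hm : 2 ≤ m) {z : ℂ} {k : ℕ} (hk : 0 < k)
    (hz : z ^ k = 1) :
    (3 * (m : ℂ) ^ 2 + 1) * z ^ 8 + 4 * (m : ℂ) ^ 2 * z ^ 6 + 2 * ((m : ℂ) ^ 2 + 1) * z ^ 4 +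
      4 * (m : ℂ) ^ 2 * z ^ 2 + (3 * (m : ℂ) ^ 2 + 1) ≠ 0 := by
  have hz0 : z ≠ 0 := by rintro rfl; simp [zero_pow hk.ne'] at hz
  intro hP
  refine walk_quadratic_ne_zero_of_pow_eq_one hm hk (v := z ^ 2)
    (by rw [← pow_mul, mul_comm, pow_mul, hz, one_pow]) ?_
  refine (mul_eq_zero.mp ?_).resolve_left (pow_ne_zero 4 hz0)
  rw [← hP]
  field_simp
  ring

theorem irrational_arccos_div_pi_of_walk_quadratic (hm : 2 ≤ m) {x : ℝ} (hx : x ∈ Set.Icc (-1) 1)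
    (hq : (3 * (m : ℝ) ^ 2 + 1) * (4 * x ^ 2 - 2) ^ 2 + 4 * (m : ℝ) ^ 2 * (4 * x ^ 2 - 2)
      - 4 * (m : ℝ) ^ 2 = 0) :
    Irrational (Real.arccos x / Real.pi) := by
  rintro ⟨q, hθ⟩
  have hcos : Real.cos (2 * (q * Real.pi)) = 2 * x ^ 2 - 1 := by
    rw [Real.cos_two_mul, hθ, div_mul_cancel₀ _ Real.pi_ne_zero, Real.cos_arccos hx.1 hx.2]
  have hv : Complex.exp (q * (2 * Real.pi * Complex.I)) +
      (Complex.exp (q * (2 * Real.pi * Complex.I)))⁻¹ = ((4 * x ^ 2 - 2 : ℝ) : ℂ) := by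
    rw [← Complex.exp_neg, show (4 * x ^ 2 - 2 : ℝ) = 2 * (2 * x ^ 2 - 1) by ring, ← hcos]
    push_cast
    rw [Complex.two_cos]
    ring_nf
  apply walk_quadratic_ne_zero_of_pow_eq_one hm q.den_pos
    (Complex.exp_rat_mul_two_pi_mul_I_pow_den q)
  rw [hv]
  exact_mod_cast hq

end WalkQuadratic

/-- For `m ≥ 2`, the polynomial `(3m²+1)v⁸ + 4m²v⁶ + 2(m²+1)v⁴ + 4m²v² + 3m²+1` has no
root of unity among its roots; consequently, with
`c = -√((1+2m²-m√(1+4m²))/(2(3m²+1)))`, the quantity `arccos(-c)/π` is irrational. -/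
theorem stmt19 (m : ℕ) (hm : 2 ≤ m) :
    (∀ z : ℂ, (∃ k : ℕ, 0 < k ∧ z ^ k = 1) →
      (3 * (m : ℂ) ^ 2 + 1) * z ^ 8 + 4 * (m : ℂ) ^ 2 * z ^ 6 +
          2 * ((m : ℂ) ^ 2 + 1) * z ^ 4 + 4 * (m : ℂ) ^ 2 * z ^ 2 +
          (3 * (m : ℂ) ^ 2 + 1) ≠ 0) ∧
    (let c : ℝ := -Real.sqrt ((1 + 2 * (m : ℝ) ^ 2 -
          (m : ℝ) * Real.sqrt (1 + 4 * (m : ℝ) ^ 2)) / (2 * (3 * (m : ℝ) ^ 2 + 1)));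
      Irrational (Real.arccos (-c) / Real.pi)) := by
  refine ⟨fun z ⟨k, hk, hz⟩ => walk_octic_ne_zero_of_pow_eq_one hm hk hz, ?_⟩
  show Irrational (Real.arccos (-(-√(walkCosSq m))) / Real.pi)
  obtain ⟨hA0, hA1⟩ := walkCosSq_mem_Icc m
  rw [neg_neg]
  refine irrational_arccos_div_pi_of_walk_quadratic hm
    ⟨(neg_one_lt_zero.trans_le (Real.sqrt_nonneg _)).le, Real.sqrt_le_one.mpr hA1⟩ ?_
  rw [Real.sq_sqrt hA0]
  exact_mod_cast walk_quadratic_walkCosSq m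
end
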